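/- Let ϱ₋, ϱ₊, ϱ_{M−}, ϱ_{M+}, p₋, p₊, p_M be positive reals with ϱ_{M−} > ϱ₋ and ϱ_{M+} > ϱ₊, let v₊ < 0 < v₋ and v_M = 0, and let σ₋, σ₊ be reals satisfying the Rankine–Hugoniot conditions σ₋(ϱ₋ − ϱ_{M−}) = ϱ₋v₋ − ϱ_{M−}v_M, σ₋(ϱ₋v₋ − ϱ_{M−}v_M) = ϱ₋v₋² − ϱ_{M−}v_M² + p₋ − p_M, σ₊(ϱ_{M+} − ϱ₊) = ϱ_{M+}v_M − ϱ₊v₊, and σ₊(ϱ_{M+}v_M − ϱ₊v₊) = ϱ_{M+}v_M² − ϱ₊v₊² + p_M − p₊. Suppose ε_max > 0 is such that for all ε ∈ (0, ε_max]: A(ε) ≠ 0, B(ε) > 0, and ϱ_{M+} − ε − ϱ₊ > 0. Then, with μ₀(ε), μ₁(ε), μ₂(ε) defined as (1/A(ε))·[D(ε) + ϱ₋ϱ₊(ϱ_{M+}−ε)(v₋−v₊) − √((ϱ_{M−}+ε)²·((ϱ_{M+}−ε−ϱ₊)/(ϱ_{M−}+ε−ϱ₋))·B(ε))], (1/A(ε))·[D(ε)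 − √((ϱ_{M−}+ε−ϱ₋)(ϱ_{M+}−ε−ϱ₊)·B(ε))], and (1/A(ε))·[D(ε) + ϱ₋ϱ₊(ϱ_{M−}+ε)(v₋−v₊) − √((ϱ_{M+}−ε)²·((ϱ_{M−}+ε−ϱ₋)/(ϱ_{M+}−ε−ϱ₊))·B(ε))] respectively, one has μ₀(ε) → σ₋, μ₁(ε) → v_M = 0, and μ₂(ε) → σ₊ as ε → 0⁺. -/
import Mathlib


noncomputable section

/-- `A(ε) = ϱ₋(ϱ_{M−}+ε)(ϱ_{M+}−ε−ϱ₊) − ϱ₊(ϱ_{M+}−ε)(ϱ_{M−}+ε−ϱ₋)`. -/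
def Aeps (ϱm ϱp ϱMm ϱMp ε : ℝ) : ℝ :=
  ϱm * (ϱMm + ε) * (ϱMp - ε - ϱp) - ϱp * (ϱMp - ε) * (ϱMm + ε - ϱm)

/-- `B(ε) = ϱ₋ϱ₊(ϱ_{M−}+ε)(ϱ_{M+}−ε)(v₋−v₊)² − (p₋−p₊)A(ε)`. -/
def Beps (ϱm ϱp ϱMm ϱMp pm pp vm vp ε : ℝ) : ℝ :=
  ϱm * ϱp * (ϱMm + ε) * (ϱMp - ε) * (vm - vp) ^ 2 -
    (pm - pp) * Aeps ϱm ϱp ϱMm ϱMp ε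

/-- `D(ε) = v₋ϱ₋(ϱ_{M−}+ε)(ϱ_{M+}−ε−ϱ₊) − v₊ϱ₊(ϱ_{M+}−ε)(ϱ_{M−}+ε−ϱ₋)`. -/
def Deps (ϱm ϱp ϱMm ϱMp vm vp ε : ℝ) : ℝ :=
  vm * ϱm * (ϱMm + ε) * (ϱMp - ε - ϱp) - vp * ϱp * (ϱMp - ε) * (ϱMm + ε - ϱm)

/-- The perturbed speed `μ₀(ε)` of the left interface. -/
def mu0eps (ϱm ϱp ϱMm ϱMp pm pp vm vp ε : ℝ) : ℝ :=
  (1 / Aeps ϱm ϱp ϱMm ϱMp ε) *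
    (Deps ϱm ϱp ϱMm ϱMp vm vp ε + ϱm * ϱp * (ϱMp - ε) * (vm - vp) -
      Real.sqrt ((ϱMm + ε) ^ 2 * ((ϱMp - ε - ϱp) / (ϱMm + ε - ϱm)) *
        Beps ϱm ϱp ϱMm ϱMp pm pp vm vp ε))

/-- The perturbed speed `μ₁(ε)` of the middle interface. -/
def mu1eps (ϱm ϱp ϱMm ϱMp pm pp vm vp ε : ℝ) : ℝ :=
  (1 / Aeps ϱm ϱp ϱMm ϱMp ε) *
    (Deps ϱm ϱp ϱMm ϱMp vm vp ε -
      Real.sqrt ((ϱMm + ε - ϱm) * (ϱMp - ε - ϱp) *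
        Beps ϱm ϱp ϱMm ϱMp pm pp vm vp ε))

/-- The perturbed speed `μ₂(ε)` of the right interface. -/
def mu2eps (ϱm ϱp ϱMm ϱMp pm pp vm vp ε : ℝ) : ℝ :=
  (1 / Aeps ϱm ϱp ϱMm ϱMp ε) *
    (Deps ϱm ϱp ϱMm ϱMp vm vp ε + ϱm * ϱp * (ϱMm + ε) * (vm - vp) -
      Real.sqrt ((ϱMp - ε) ^ 2 * ((ϱMm + ε - ϱm) / (ϱMp - ε - ϱp)) *
        Beps ϱm ϱp ϱMm ϱMp pm pp vm vp ε))

open Filter Topology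

private lemma aux_tendsto (A N S C : ℝ → ℝ) (L : ℝ)
    (hN : Tendsto N (𝓝[>] (0:ℝ)) (𝓝 (N 0)))
    (hS : Tendsto S (𝓝[>] (0:ℝ)) (𝓝 (S 0)))
    (hC : Tendsto C (𝓝[>] (0:ℝ)) (𝓝 (C 0)))
    (hN0 : 0 < N 0) (hS0 : 0 ≤ S 0)
    (hval : C 0 / (N 0 + Real.sqrt (S 0)) = L)
    (hev : ∀ᶠ ε in 𝓝[>] (0:ℝ),
      A ε ≠ 0 ∧ 0 ≤ S ε ∧ N ε ^ 2 - S ε = A ε * C ε) :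
    Tendsto (fun ε => (1 / A ε) * (N ε - Real.sqrt (S ε))) (𝓝[>] (0:ℝ)) (𝓝 L) := by
  have hden : (0:ℝ) < N 0 + Real.sqrt (S 0) := by
    have := Real.sqrt_nonneg (S 0); linarith
  have hF : Tendsto (fun ε => C ε / (N ε + Real.sqrt (S ε))) (𝓝[>] (0:ℝ)) (𝓝 L) := by
    rw [← hval]
    exact hC.div (hN.add ((Real.continuous_sqrt.tendsto (S 0)).comp hS)) hden.ne'
  have hNpos : ∀ᶠ ε in 𝓝[>] (0:ℝ), 0 < N ε :=
    hN.eventually (eventually_gt_nhds hN0)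
  refine hF.congr' ?_
  filter_upwards [hev, hNpos] with ε hε hNp
  obtain ⟨hA, hSnn, hid⟩ := hε
  have h1 : 0 < N ε + Real.sqrt (S ε) := by
    have := Real.sqrt_nonneg (S ε); linarith
  have hsq : Real.sqrt (S ε) ^ 2 = S ε := Real.sq_sqrt hSnn
  rw [eq_comm, one_div, inv_mul_eq_div, div_eq_div_iff hA h1.ne']
  linear_combination hid - hsq

set_option maxHeartbeats 2000000 in
/-- **Proposition (limits of the perturbed interface speeds).** As `ε → 0⁺` the
perturbed interface speeds `μ₀(ε), μ₁(ε), μ₂(ε)` converge to the shock speeds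
`σ₋`, the contact speed `v_M = 0`, and `σ₊` of the two-shock 1D Riemann
solution. -/
theorem perturbed_speeds_limits
    (ϱm ϱp ϱMm ϱMp pm pp pM vm vp vM σm σp εmax : ℝ)
    (hϱm : 0 < ϱm) (hϱp : 0 < ϱp) (hMm0 : 0 < ϱMm) (hMp0 : 0 < ϱMp)
    (hpm : 0 < pm) (hpp : 0 < pp) (hpM : 0 < pM)
    (hMm : ϱm < ϱMm) (hMp : ϱp < ϱMp)
    (hvp : vp < 0) (hvm : 0 < vm) (hvM : vM = 0)
    (hrh1 : σm * (ϱm - ϱMm) = ϱm * vm - ϱMm * vM)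
    (hrh2 : σm * (ϱm * vm - ϱMm * vM) = ϱm * vm ^ 2 - ϱMm * vM ^ 2 + pm - pM)
    (hrh3 : σp * (ϱMp - ϱp) = ϱMp * vM - ϱp * vp)
    (hrh4 : σp * (ϱMp * vM - ϱp * vp) = ϱMp * vM ^ 2 - ϱp * vp ^ 2 + pM - pp)
    (hεmax : 0 < εmax)
    (hgood : ∀ ε ∈ Set.Ioc (0 : ℝ) εmax,
      Aeps ϱm ϱp ϱMm ϱMp ε ≠ 0 ∧
      0 < Beps ϱm ϱp ϱMm ϱMp pm pp vm vp ε ∧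
      0 < ϱMp - ε - ϱp) :
    Tendsto (fun ε => mu0eps ϱm ϱp ϱMm ϱMp pm pp vm vp ε) (𝓝[>] 0) (𝓝 σm) ∧
    Tendsto (fun ε => mu1eps ϱm ϱp ϱMm ϱMp pm pp vm vp ε) (𝓝[>] 0) (𝓝 vM) ∧
    Tendsto (fun ε => mu2eps ϱm ϱp ϱMm ϱMp pm pp vm vp ε) (𝓝[>] 0) (𝓝 σp) := by
  subst hvM
  have hα : (0:ℝ) < ϱMm - ϱm := by linarith
  have hβ : (0:ℝ) < ϱMp - ϱp := by linarith
  have hαne : ϱMm - ϱm ≠ 0 := ne_of_gt hα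
  have hβne : ϱMp - ϱp ≠ 0 := ne_of_gt hβ
  have hσm' : σm = -(ϱm * vm) / (ϱMm - ϱm) := by
    rw [eq_div_iff hαne]; linear_combination -hrh1
  have hσp' : σp = -(ϱp * vp) / (ϱMp - ϱp) := by
    rw [eq_div_iff hβne]; linear_combination hrh3
  have hK : ϱm * ϱMm * vm ^ 2 = (pM - pm) * (ϱMm - ϱm) := by
    linear_combination (ϱm - ϱMm) * hrh2 - ϱm * vm * hrh1
  have hL : ϱp * ϱMp * vp ^ 2 = (pM - pp) * (ϱMp - ϱp) := by
    linear_combination (ϱMp - ϱp) * hrh4 + ϱp * vp * hrh3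
  have hpmpp : pm - pp =
      ϱp * ϱMp * vp ^ 2 / (ϱMp - ϱp) - ϱm * ϱMm * vm ^ 2 / (ϱMm - ϱm) := by
    rw [div_sub_div _ _ hβne hαne, eq_div_iff (mul_ne_zero hβne hαne)]
    linear_combination (ϱMp - ϱp) * hK - (ϱMm - ϱm) * hL
  have hIoc : Set.Ioc (0:ℝ) εmax ∈ 𝓝[>] (0:ℝ) :=
    Ioc_mem_nhdsGT_of_mem ⟨le_refl 0, hεmax⟩
  have hvmvp : (0:ℝ) < vm - vp := by linarith
  have hBcont : Continuous (fun ε => Beps ϱm ϱp ϱMm ϱMp pm pp vm vp ε) := by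
    unfold Beps Aeps; fun_prop
  have hane0 : ϱMm + 0 - ϱm ≠ 0 := by simpa using hαne
  have hbne0 : ϱMp - 0 - ϱp ≠ 0 := by simpa using hβne
  -- common positive products
  have hP1 : 0 < vm * ϱm * ϱMm * (ϱMp - ϱp) := by positivity
  have hP2 : 0 < (-vp) * ϱp * ϱMp * (ϱMm - ϱm) := by
    have : 0 < -vp := by linarith
    positivity
  have hP3 : 0 < ϱm * ϱp * ϱMp * (vm - vp) := by positivity
  have hP4 : 0 < ϱm * ϱp * ϱMm * (vm - vp) := by positivity
  refine ⟨?_, ?_, ?_⟩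
  · -- μ₀ → σ₋
    simp only [mu0eps]
    have hN00 : 0 < Deps ϱm ϱp ϱMm ϱMp vm vp 0 + ϱm * ϱp * (ϱMp - 0) * (vm - vp) := by
      simp only [Deps]; nlinarith [hP1, hP2, hP3]
    have hR0nn : (0:ℝ) ≤ ϱMm * (ϱm * ϱMm * vm * (ϱMp - ϱp) / (ϱMm - ϱm) - ϱp * ϱMp * vp) := by
      have h1 : 0 < ϱm * ϱMm * vm * (ϱMp - ϱp) / (ϱMm - ϱm) := by
        apply div_pos _ hα; positivity
      have h2 : ϱp * ϱMp * vp < 0 := by nlinarith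
      nlinarith [hMm0]
    have hS0eq : (ϱMm + 0) ^ 2 * ((ϱMp - 0 - ϱp) / (ϱMm + 0 - ϱm)) *
        Beps ϱm ϱp ϱMm ϱMp pm pp vm vp 0 =
        (ϱMm * (ϱm * ϱMm * vm * (ϱMp - ϱp) / (ϱMm - ϱm) - ϱp * ϱMp * vp)) ^ 2 := by
      simp only [Beps, Aeps]
      rw [hpmpp]
      field_simp
      ring
    have hval0 : (ϱm * ((ϱMm + 0) ^ 3 * (ϱMp - 0 - ϱp) - 2 * ϱm * (ϱMm + 0) ^ 2 * (ϱMp - 0 - ϱp) +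
          ϱm * Aeps ϱm ϱp ϱMm ϱMp 0) * vm ^ 2 +
          (ϱMm + 0 - ϱm) * (2 * ϱm * ϱp * (ϱMm + 0) * (ϱMp - 0) * vm * vp -
            ϱp * (ϱMm + 0) ^ 2 * (ϱMp - 0) * vp ^ 2 +
            (pm - pp) * (ϱMm + 0) ^ 2 * (ϱMp - 0 - ϱp))) / (ϱMm + 0 - ϱm) ^ 2 /
        (Deps ϱm ϱp ϱMm ϱMp vm vp 0 + ϱm * ϱp * (ϱMp - 0) * (vm - vp) +
          Real.sqrt ((ϱMm + 0) ^ 2 * ((ϱMp - 0 - ϱp) / (ϱMm + 0 - ϱm)) *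
            Beps ϱm ϱp ϱMm ϱMp pm pp vm vp 0)) = σm := by
      rw [hS0eq, Real.sqrt_sq hR0nn, hσm']
      have hd : 0 < Deps ϱm ϱp ϱMm ϱMp vm vp 0 + ϱm * ϱp * (ϱMp - 0) * (vm - vp) +
          ϱMm * (ϱm * ϱMm * vm * (ϱMp - ϱp) / (ϱMm - ϱm) - ϱp * ϱMp * vp) := by
        linarith [hN00, hR0nn]
      rw [div_eq_div_iff hd.ne' hαne]
      simp only [Deps, Aeps]
      rw [hpmpp]
      field_simp
      ring
    have hev0 : ∀ᶠ ε in 𝓝[>] (0:ℝ),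
        Aeps ϱm ϱp ϱMm ϱMp ε ≠ 0 ∧
        0 ≤ (ϱMm + ε) ^ 2 * ((ϱMp - ε - ϱp) / (ϱMm + ε - ϱm)) *
            Beps ϱm ϱp ϱMm ϱMp pm pp vm vp ε ∧
        (Deps ϱm ϱp ϱMm ϱMp vm vp ε + ϱm * ϱp * (ϱMp - ε) * (vm - vp)) ^ 2 -
            (ϱMm + ε) ^ 2 * ((ϱMp - ε - ϱp) / (ϱMm + ε - ϱm)) *
              Beps ϱm ϱp ϱMm ϱMp pm pp vm vp ε =
          Aeps ϱm ϱp ϱMm ϱMp ε *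
            ((ϱm * ((ϱMm + ε) ^ 3 * (ϱMp - ε - ϱp) - 2 * ϱm * (ϱMm + ε) ^ 2 * (ϱMp - ε - ϱp) +
              ϱm * Aeps ϱm ϱp ϱMm ϱMp ε) * vm ^ 2 +
              (ϱMm + ε - ϱm) * (2 * ϱm * ϱp * (ϱMm + ε) * (ϱMp - ε) * vm * vp -
                ϱp * (ϱMm + ε) ^ 2 * (ϱMp - ε) * vp ^ 2 +
                (pm - pp) * (ϱMm + ε) ^ 2 * (ϱMp - ε - ϱp))) / (ϱMm + ε - ϱm) ^ 2) := by
      filter_upwards [hIoc] with ε hε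
      obtain ⟨hA, hB, hc'⟩ := hgood ε hε
      have hapos : 0 < ϱMm + ε - ϱm := by linarith [hε.1]
      refine ⟨hA, ?_, ?_⟩
      · have h1 : 0 ≤ (ϱMp - ε - ϱp) / (ϱMm + ε - ϱm) := (div_pos hc' hapos).le
        have h2 : (0:ℝ) ≤ (ϱMm + ε) ^ 2 := sq_nonneg _
        nlinarith [mul_nonneg (mul_nonneg h2 h1) hB.le]
      · simp only [Deps, Beps, Aeps]
        field_simp
        ring
    have hScont0 : ContinuousAt (fun ε => (ϱMm + ε) ^ 2 * ((ϱMp - ε - ϱp) / (ϱMm + ε - ϱm)) *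
        Beps ϱm ϱp ϱMm ϱMp pm pp vm vp ε) 0 := by
      apply ContinuousAt.mul
      apply ContinuousAt.mul
      · fun_prop
      · exact ContinuousAt.div (by fun_prop) (by fun_prop) hane0
      · exact hBcont.continuousAt
    have hCcont0 : ContinuousAt (fun ε => (ϱm * ((ϱMm + ε) ^ 3 * (ϱMp - ε - ϱp) -
          2 * ϱm * (ϱMm + ε) ^ 2 * (ϱMp - ε - ϱp) +
          ϱm * Aeps ϱm ϱp ϱMm ϱMp ε) * vm ^ 2 +
          (ϱMm + ε - ϱm) * (2 * ϱm * ϱp * (ϱMm + ε) * (ϱMp - ε) * vm * vp -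
            ϱp * (ϱMm + ε) ^ 2 * (ϱMp - ε) * vp ^ 2 +
            (pm - pp) * (ϱMm + ε) ^ 2 * (ϱMp - ε - ϱp))) / (ϱMm + ε - ϱm) ^ 2) 0 := by
      apply ContinuousAt.div
      · unfold Aeps; fun_prop
      · fun_prop
      · exact pow_ne_zero 2 hane0
    have hS0nn : (0:ℝ) ≤ (ϱMm + 0) ^ 2 * ((ϱMp - 0 - ϱp) / (ϱMm + 0 - ϱm)) *
        Beps ϱm ϱp ϱMm ϱMp pm pp vm vp 0 := by
      rw [hS0eq]; positivity
    exact aux_tendsto (fun ε => Aeps ϱm ϱp ϱMm ϱMp ε)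
      (fun ε => Deps ϱm ϱp ϱMm ϱMp vm vp ε + ϱm * ϱp * (ϱMp - ε) * (vm - vp))
      (fun ε => (ϱMm + ε) ^ 2 * ((ϱMp - ε - ϱp) / (ϱMm + ε - ϱm)) *
        Beps ϱm ϱp ϱMm ϱMp pm pp vm vp ε)
      (fun ε => (ϱm * ((ϱMm + ε) ^ 3 * (ϱMp - ε - ϱp) - 2 * ϱm * (ϱMm + ε) ^ 2 * (ϱMp - ε - ϱp) +
          ϱm * Aeps ϱm ϱp ϱMm ϱMp ε) * vm ^ 2 +
          (ϱMm + ε - ϱm) * (2 * ϱm * ϱp * (ϱMm + ε) * (ϱMp - ε) * vm * vp -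
            ϱp * (ϱMm + ε) ^ 2 * (ϱMp - ε) * vp ^ 2 +
            (pm - pp) * (ϱMm + ε) ^ 2 * (ϱMp - ε - ϱp))) / (ϱMm + ε - ϱm) ^ 2)
      σm
      (((by unfold Deps; fun_prop : Continuous fun ε =>
          Deps ϱm ϱp ϱMm ϱMp vm vp ε + ϱm * ϱp * (ϱMp - ε) * (vm - vp)).tendsto 0).mono_left
        nhdsWithin_le_nhds)
      (hScont0.tendsto.mono_left nhdsWithin_le_nhds)
      (hCcont0.tendsto.mono_left nhdsWithin_le_nhds)
      hN00 hS0nn hval0 hev0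
  · -- μ₁ → 0
    simp only [mu1eps]
    have hN10 : 0 < Deps ϱm ϱp ϱMm ϱMp vm vp 0 := by
      simp only [Deps]; nlinarith [hP1, hP2]
    have hR1nn : (0:ℝ) ≤ ϱm * ϱMm * vm * (ϱMp - ϱp) - ϱp * ϱMp * vp * (ϱMm - ϱm) := by
      nlinarith [hP1, hP2]
    have hS1eq : (ϱMm + 0 - ϱm) * (ϱMp - 0 - ϱp) * Beps ϱm ϱp ϱMm ϱMp pm pp vm vp 0 =
        (ϱm * ϱMm * vm * (ϱMp - ϱp) - ϱp * ϱMp * vp * (ϱMm - ϱm)) ^ 2 := by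
      simp only [Beps, Aeps]
      rw [hpmpp]
      field_simp
      ring
    have hC10 : vm ^ 2 * (ϱm * (ϱMm + 0) * (ϱMp - 0 - ϱp)) -
        vp ^ 2 * (ϱp * (ϱMp - 0) * (ϱMm + 0 - ϱm)) +
        (pm - pp) * (ϱMm + 0 - ϱm) * (ϱMp - 0 - ϱp) = 0 := by
      rw [hpmpp]
      field_simp
      ring
    have hval1 : (vm ^ 2 * (ϱm * (ϱMm + 0) * (ϱMp - 0 - ϱp)) -
        vp ^ 2 * (ϱp * (ϱMp - 0) * (ϱMm + 0 - ϱm)) +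
        (pm - pp) * (ϱMm + 0 - ϱm) * (ϱMp - 0 - ϱp)) /
        (Deps ϱm ϱp ϱMm ϱMp vm vp 0 +
          Real.sqrt ((ϱMm + 0 - ϱm) * (ϱMp - 0 - ϱp) *
            Beps ϱm ϱp ϱMm ϱMp pm pp vm vp 0)) = 0 := by
      rw [hC10, zero_div]
    have hev1 : ∀ᶠ ε in 𝓝[>] (0:ℝ),
        Aeps ϱm ϱp ϱMm ϱMp ε ≠ 0 ∧
        0 ≤ (ϱMm + ε - ϱm) * (ϱMp - ε - ϱp) * Beps ϱm ϱp ϱMm ϱMp pm pp vm vp ε ∧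
        Deps ϱm ϱp ϱMm ϱMp vm vp ε ^ 2 -
            (ϱMm + ε - ϱm) * (ϱMp - ε - ϱp) * Beps ϱm ϱp ϱMm ϱMp pm pp vm vp ε =
          Aeps ϱm ϱp ϱMm ϱMp ε *
            (vm ^ 2 * (ϱm * (ϱMm + ε) * (ϱMp - ε - ϱp)) -
              vp ^ 2 * (ϱp * (ϱMp - ε) * (ϱMm + ε - ϱm)) +
              (pm - pp) * (ϱMm + ε - ϱm) * (ϱMp - ε - ϱp)) := by
      filter_upwards [hIoc] with ε hε
      obtain ⟨hA, hB, hc'⟩ := hgood ε hε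
      have hapos : 0 < ϱMm + ε - ϱm := by linarith [hε.1]
      refine ⟨hA, ?_, ?_⟩
      · nlinarith [mul_nonneg (mul_nonneg hapos.le hc'.le) hB.le]
      · simp only [Deps, Beps, Aeps]; ring
    have hS1nn : (0:ℝ) ≤ (ϱMm + 0 - ϱm) * (ϱMp - 0 - ϱp) *
        Beps ϱm ϱp ϱMm ϱMp pm pp vm vp 0 := by
      rw [hS1eq]; positivity
    exact aux_tendsto (fun ε => Aeps ϱm ϱp ϱMm ϱMp ε)
      (fun ε => Deps ϱm ϱp ϱMm ϱMp vm vp ε)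
      (fun ε => (ϱMm + ε - ϱm) * (ϱMp - ε - ϱp) * Beps ϱm ϱp ϱMm ϱMp pm pp vm vp ε)
      (fun ε => vm ^ 2 * (ϱm * (ϱMm + ε) * (ϱMp - ε - ϱp)) -
        vp ^ 2 * (ϱp * (ϱMp - ε) * (ϱMm + ε - ϱm)) +
        (pm - pp) * (ϱMm + ε - ϱm) * (ϱMp - ε - ϱp))
      0
      (((by unfold Deps; fun_prop : Continuous fun ε =>
          Deps ϱm ϱp ϱMm ϱMp vm vp ε).tendsto 0).mono_left nhdsWithin_le_nhds)
      (((by fun_prop : Continuous fun ε => (ϱMm + ε - ϱm) * (ϱMp - ε - ϱp) *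
          Beps ϱm ϱp ϱMm ϱMp pm pp vm vp ε).tendsto 0).mono_left nhdsWithin_le_nhds)
      (((by fun_prop : Continuous fun ε => vm ^ 2 * (ϱm * (ϱMm + ε) * (ϱMp - ε - ϱp)) -
          vp ^ 2 * (ϱp * (ϱMp - ε) * (ϱMm + ε - ϱm)) +
          (pm - pp) * (ϱMm + ε - ϱm) * (ϱMp - ε - ϱp)).tendsto 0).mono_left nhdsWithin_le_nhds)
      hN10 hS1nn hval1 hev1
  · -- μ₂ → σ₊
    simp only [mu2eps]
    have hN20 : 0 < Deps ϱm ϱp ϱMm ϱMp vm vp 0 + ϱm * ϱp * (ϱMm + 0) * (vm - vp) := by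
      simp only [Deps]; nlinarith [hP1, hP2, hP4]
    have hR2nn : (0:ℝ) ≤ ϱMp * (ϱm * ϱMm * vm - ϱp * ϱMp * vp * (ϱMm - ϱm) / (ϱMp - ϱp)) := by
      have h1 : 0 < -(ϱp * ϱMp * vp * (ϱMm - ϱm) / (ϱMp - ϱp)) := by
        rw [neg_pos]
        apply div_neg_of_neg_of_pos _ hβ
        have hvp' : 0 < -vp := by linarith
        nlinarith [mul_pos (mul_pos hϱp hMp0) hvp', mul_pos (mul_pos (mul_pos hϱp hMp0) hvp') hα]
      have h2 : 0 < ϱm * ϱMm * vm := by positivity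
      have h3 : 0 < ϱm * ϱMm * vm - ϱp * ϱMp * vp * (ϱMm - ϱm) / (ϱMp - ϱp) := by
        nlinarith [h1, h2]
      exact (mul_pos hMp0 h3).le
    have hS2eq : (ϱMp - 0) ^ 2 * ((ϱMm + 0 - ϱm) / (ϱMp - 0 - ϱp)) *
        Beps ϱm ϱp ϱMm ϱMp pm pp vm vp 0 =
        (ϱMp * (ϱm * ϱMm * vm - ϱp * ϱMp * vp * (ϱMm - ϱm) / (ϱMp - ϱp))) ^ 2 := by
      simp only [Beps, Aeps]
      rw [hpmpp]
      field_simp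
      ring
    have hval2 : (-(ϱp * ((ϱMp - 0) ^ 3 * (ϱMm + 0 - ϱm) - 2 * ϱp * (ϱMp - 0) ^ 2 * (ϱMm + 0 - ϱm) -
          ϱp * Aeps ϱm ϱp ϱMm ϱMp 0)) * vp ^ 2 +
          (ϱMp - 0 - ϱp) * (-(2 * ϱm * ϱp * (ϱMm + 0) * (ϱMp - 0) * vm * vp) +
            ϱm * (ϱMm + 0) * (ϱMp - 0) ^ 2 * vm ^ 2 +
            (pm - pp) * (ϱMp - 0) ^ 2 * (ϱMm + 0 - ϱm))) / (ϱMp - 0 - ϱp) ^ 2 /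
        (Deps ϱm ϱp ϱMm ϱMp vm vp 0 + ϱm * ϱp * (ϱMm + 0) * (vm - vp) +
          Real.sqrt ((ϱMp - 0) ^ 2 * ((ϱMm + 0 - ϱm) / (ϱMp - 0 - ϱp)) *
            Beps ϱm ϱp ϱMm ϱMp pm pp vm vp 0)) = σp := by
      rw [hS2eq, Real.sqrt_sq hR2nn, hσp']
      have hd : 0 < Deps ϱm ϱp ϱMm ϱMp vm vp 0 + ϱm * ϱp * (ϱMm + 0) * (vm - vp) +
          ϱMp * (ϱm * ϱMm * vm - ϱp * ϱMp * vp * (ϱMm - ϱm) / (ϱMp - ϱp)) := by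
        linarith [hN20, hR2nn]
      rw [div_eq_div_iff hd.ne' hβne]
      simp only [Deps, Aeps]
      rw [hpmpp]
      field_simp
      ring
    have hev2 : ∀ᶠ ε in 𝓝[>] (0:ℝ),
        Aeps ϱm ϱp ϱMm ϱMp ε ≠ 0 ∧
        0 ≤ (ϱMp - ε) ^ 2 * ((ϱMm + ε - ϱm) / (ϱMp - ε - ϱp)) *
            Beps ϱm ϱp ϱMm ϱMp pm pp vm vp ε ∧
        (Deps ϱm ϱp ϱMm ϱMp vm vp ε + ϱm * ϱp * (ϱMm + ε) * (vm - vp)) ^ 2 -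
            (ϱMp - ε) ^ 2 * ((ϱMm + ε - ϱm) / (ϱMp - ε - ϱp)) *
              Beps ϱm ϱp ϱMm ϱMp pm pp vm vp ε =
          Aeps ϱm ϱp ϱMm ϱMp ε *
            ((-(ϱp * ((ϱMp - ε) ^ 3 * (ϱMm + ε - ϱm) - 2 * ϱp * (ϱMp - ε) ^ 2 * (ϱMm + ε - ϱm) -
              ϱp * Aeps ϱm ϱp ϱMm ϱMp ε)) * vp ^ 2 +
              (ϱMp - ε - ϱp) * (-(2 * ϱm * ϱp * (ϱMm + ε) * (ϱMp - ε) * vm * vp) +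
                ϱm * (ϱMm + ε) * (ϱMp - ε) ^ 2 * vm ^ 2 +
                (pm - pp) * (ϱMp - ε) ^ 2 * (ϱMm + ε - ϱm))) / (ϱMp - ε - ϱp) ^ 2) := by
      filter_upwards [hIoc] with ε hε
      obtain ⟨hA, hB, hc'⟩ := hgood ε hε
      have hapos : 0 < ϱMm + ε - ϱm := by linarith [hε.1]
      refine ⟨hA, ?_, ?_⟩
      · have h1 : 0 ≤ (ϱMm + ε - ϱm) / (ϱMp - ε - ϱp) := (div_pos hapos hc').le
        have h2 : (0:ℝ) ≤ (ϱMp - ε) ^ 2 := sq_nonneg _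
        nlinarith [mul_nonneg (mul_nonneg h2 h1) hB.le]
      · simp only [Deps, Beps, Aeps]
        field_simp
        ring
    have hScont2 : ContinuousAt (fun ε => (ϱMp - ε) ^ 2 * ((ϱMm + ε - ϱm) / (ϱMp - ε - ϱp)) *
        Beps ϱm ϱp ϱMm ϱMp pm pp vm vp ε) 0 := by
      apply ContinuousAt.mul
      apply ContinuousAt.mul
      · fun_prop
      · exact ContinuousAt.div (by fun_prop) (by fun_prop) hbne0
      · exact hBcont.continuousAt
    have hCcont2 : ContinuousAt (fun ε => (-(ϱp * ((ϱMp - ε) ^ 3 * (ϱMm + ε - ϱm) -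
          2 * ϱp * (ϱMp - ε) ^ 2 * (ϱMm + ε - ϱm) -
          ϱp * Aeps ϱm ϱp ϱMm ϱMp ε)) * vp ^ 2 +
          (ϱMp - ε - ϱp) * (-(2 * ϱm * ϱp * (ϱMm + ε) * (ϱMp - ε) * vm * vp) +
            ϱm * (ϱMm + ε) * (ϱMp - ε) ^ 2 * vm ^ 2 +
            (pm - pp) * (ϱMp - ε) ^ 2 * (ϱMm + ε - ϱm))) / (ϱMp - ε - ϱp) ^ 2) 0 := by
      apply ContinuousAt.div
      · unfold Aeps; fun_prop
      · fun_prop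
      · exact pow_ne_zero 2 hbne0
    have hS2nn : (0:ℝ) ≤ (ϱMp - 0) ^ 2 * ((ϱMm + 0 - ϱm) / (ϱMp - 0 - ϱp)) *
        Beps ϱm ϱp ϱMm ϱMp pm pp vm vp 0 := by
      rw [hS2eq]; positivity
    exact aux_tendsto (fun ε => Aeps ϱm ϱp ϱMm ϱMp ε)
      (fun ε => Deps ϱm ϱp ϱMm ϱMp vm vp ε + ϱm * ϱp * (ϱMm + ε) * (vm - vp))
      (fun ε => (ϱMp - ε) ^ 2 * ((ϱMm + ε - ϱm) / (ϱMp - ε - ϱp)) *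
        Beps ϱm ϱp ϱMm ϱMp pm pp vm vp ε)
      (fun ε => (-(ϱp * ((ϱMp - ε) ^ 3 * (ϱMm + ε - ϱm) - 2 * ϱp * (ϱMp - ε) ^ 2 * (ϱMm + ε - ϱm) -
          ϱp * Aeps ϱm ϱp ϱMm ϱMp ε)) * vp ^ 2 +
          (ϱMp - ε - ϱp) * (-(2 * ϱm * ϱp * (ϱMm + ε) * (ϱMp - ε) * vm * vp) +
            ϱm * (ϱMm + ε) * (ϱMp - ε) ^ 2 * vm ^ 2 +
            (pm - pp) * (ϱMp - ε) ^ 2 * (ϱMm + ε - ϱm))) / (ϱMp - ε - ϱp) ^ 2)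
      σp
      (((by unfold Deps; fun_prop : Continuous fun ε =>
          Deps ϱm ϱp ϱMm ϱMp vm vp ε + ϱm * ϱp * (ϱMm + ε) * (vm - vp)).tendsto 0).mono_left
        nhdsWithin_le_nhds)
      (hScont2.tendsto.mono_left nhdsWithin_le_nhds)
      (hCcont2.tendsto.mono_left nhdsWithin_le_nhds)
      hN20 hS2nn hval2 hev2
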